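/- arXiv:2105.08300 — 6 statements merged into one kernel-verified Lean document; each statement's English description precedes it below -/
import Mathlib

section
/- Let a be an element of GF(2^(5k)) satisfying a^5 = a^4 + a^3 + a + 1. Then the absolute trace of a equals the absolute trace of 1, that is, T(a) = T(1) in GF(2). -/
theorem trace_eq_trace_one {F : Type*} [Field F] [Fintype F] [CharP F 2]
    [Algebra (ZMod 2) F]
    (k : ℕ) (hk : 0 < k) (hcard : Fintype.card F = 2 ^ (5 * k))
    (a : F) (ha : a ^ 5 = a ^ 4 + a ^ 3 + a + 1) :
    Algebra.trace (ZMod 2) F a = Algebra.trace (ZMod 2) F 1 := by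
  have hp : Fact (Nat.Prime 2) := ⟨by norm_num⟩
  have h2 : (2 : F) = 0 := by
    have := CharP.cast_eq_zero F 2
    simpa using this
  -- the Frobenius as a ZMod 2 algebra equivalence
  let φ : F →ₐ[ZMod 2] F :=
    { frobenius F 2 with
      commutes' := fun r => by
        simp only [RingHom.toMonoidHom_eq_coe, OneHom.toFun_eq_coe, MonoidHom.toOneHom_coe,
          MonoidHom.coe_coe, frobenius_def]
        rw [← map_pow, ZMod.pow_card] }
  have hbij : Function.Bijective φ :=
    (Finite.injective_iff_bijective).mp (frobenius_inj F 2)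
  let e : F ≃ₐ[ZMod 2] F := AlgEquiv.ofBijective φ hbij
  have tr_sq : ∀ x : F, Algebra.trace (ZMod 2) F (x ^ 2) = Algebra.trace (ZMod 2) F x := by
    intro x
    have := Algebra.trace_eq_of_algEquiv e x
    simpa [e, φ, AlgEquiv.ofBijective, frobenius_def] using this
  -- key identity: (a^3)^2 + a^3 = a^2 + 1
  have key : (a ^ 3) ^ 2 + a ^ 3 = a ^ 2 + 1 := by
    linear_combination (a + 1) * ha + (a ^ 4 + a ^ 3 + a) * h2
  have htr0 : Algebra.trace (ZMod 2) F ((a ^ 3) ^ 2 + a ^ 3) = 0 := by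
    rw [map_add, tr_sq]
    exact CharTwo.add_self_eq_zero _
  rw [key] at htr0
  rw [map_add, tr_sq] at htr0
  have := add_eq_zero_iff_eq_neg.mp htr0
  rw [this]
  have : -Algebra.trace (ZMod 2) F 1 = Algebra.trace (ZMod 2) F 1 := by
    have := CharTwo.neg_eq (Algebra.trace (ZMod 2) F 1)
    exact this
  exact this
end

section
/- Let a ∈ GF(2^(5k)) satisfy a^5 = a^4 + a^3 + a + 1. Then the polynomial t^2 + t + a is irreducible over GF(2^(5k)) if and only if k is odd. -/
open Polynomial

theorem quadratic_irreducible_iff_odd {F : Type*} [Field F] [Fintype F] [CharP F 2]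
    (k : ℕ) (hk : 0 < k) (hcard : Fintype.card F = 2 ^ (5 * k))
    (a : F) (ha : a ^ 5 = a ^ 4 + a ^ 3 + a + 1) :
    Irreducible (X ^ 2 + X + C a : Polynomial F) ↔ Odd k := by
  classical
  have h2 : (2 : F) = 0 := CharTwo.two_eq_zero
  -- a lies in GF(32): a^32 = a
  have h32 : a ^ 32 = a := by
    linear_combination (a^27 + a^26 + a^24 + a^22 + a^19 + a^15 + a^13 + a^12 + a^11 + a^10 +
      a^9 + a^7 + a^6 + a^3 + a^2 + a) * ha +
      (a^30 + a^28 + a^27 + a^26 + a^25 + a^23 + a^22 + a^19 + a^16 + a^15 + a^14 +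
      (2:F)*a^13 + a^12 + a^11 + (2:F)*a^10 + a^9 + a^7 + a^6 + a^5 + a^4 + a^3 + a^2) * h2
  -- trace of a over GF(2) within GF(32) is 1
  have htr5 : a + a ^ 2 + a ^ 4 + a ^ 8 + a ^ 16 = 1 := by
    linear_combination (a^11 + a^10 + a^8 + a^6 + a^2 + (1:F)) * ha +
      (a^14 + a^12 + a^11 + a^10 + a^9 + a^8 + a^6 + a^4 + a^3 + a^2 + a) * h2
  have hper : ∀ m : ℕ, a ^ 2 ^ (m + 5) = a ^ 2 ^ m := by
    intro m
    have h : (2:ℕ) ^ (m + 5) = 32 * 2 ^ m := by ring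
    rw [h, pow_mul, h32]
  have hmod : ∀ j t : ℕ, a ^ 2 ^ (5 * j + t) = a ^ 2 ^ t := by
    intro j
    induction j with
    | zero => intro t; simp
    | succ m ih =>
      intro t
      have h : 5 * (m + 1) + t = (5 * m + t) + 5 := by ring
      rw [h, hper, ih]
  have hsum5 : ∑ i ∈ Finset.range 5, a ^ 2 ^ i = 1 := by
    rw [Finset.sum_range_succ, Finset.sum_range_succ, Finset.sum_range_succ,
      Finset.sum_range_succ, Finset.sum_range_one]
    norm_num
    linear_combination htr5
  have htrace : ∀ m : ℕ, ∑ i ∈ Finset.range (5 * m), a ^ 2 ^ i = (m : F) := by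
    intro m
    induction m with
    | zero => simp
    | succ m ih =>
      have h5 : 5 * (m + 1) = 5 * m + 5 := by ring
      rw [h5, Finset.sum_range_add, ih]
      have h : ∑ i ∈ Finset.range 5, a ^ 2 ^ (5 * m + i) = 1 := by
        rw [Finset.sum_congr rfl fun i _ => hmod m i, hsum5]
      rw [h]
      push_cast
      ring
  set n := 5 * k with hn
  set Tr : F → F := fun x => ∑ i ∈ Finset.range n, x ^ 2 ^ i with hTrdef
  -- Artin-Schreier forward: elements of the form b^2 + b have trace 0
  have hAS : ∀ b : F, Tr (b ^ 2 + b) = 0 := by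
    intro b
    have hterm : ∀ i : ℕ, (b ^ 2 + b) ^ 2 ^ i = b ^ 2 ^ (i + 1) - b ^ 2 ^ i := by
      intro i
      rw [CharTwo.sub_eq_add, add_pow_char_pow, ← pow_mul, pow_succ']
    have : Tr (b ^ 2 + b) = ∑ i ∈ Finset.range n, (b ^ 2 ^ (i + 1) - b ^ 2 ^ i) :=
      Finset.sum_congr rfl fun i _ => hterm i
    rw [this, Finset.sum_range_sub (fun i => b ^ 2 ^ i)]
    have hb : b ^ 2 ^ n = b := by
      rw [← hcard]; exact FiniteField.pow_card b
    rw [hb, pow_zero, pow_one, sub_self]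
  set f : F → F := fun b => b ^ 2 + b with hfdef
  have hfib : ∀ b x : F, f x = f b ↔ x = b ∨ x = b + 1 := by
    intro b x
    constructor
    · intro h
      have hz : (x + b) * (x + b + 1) = 0 := by
        simp only [hfdef] at h
        linear_combination h + (x * b + b ^ 2 + b) * h2
      rcases mul_eq_zero.mp hz with h' | h'
      · left
        have := CharTwo.add_eq_iff_eq_add.mp h'
        simpa using this
      · right
        linear_combination h' - (b + 1) * h2
    · rintro (rfl | rfl)
      · rfl
      · simp only [hfdef]
        linear_combination (b + 1) * h2
  have hb_ne : ∀ b : F, b ≠ b + 1 := by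
    intro b hb
    have : (1 : F) = 0 := by linear_combination -hb
    exact one_ne_zero this
  have hcard_fib : ∀ y ∈ Finset.univ.image f, (Finset.univ.filter fun x => f x = y).card = 2 := by
    intro y hy
    obtain ⟨b, -, rfl⟩ := Finset.mem_image.mp hy
    have h : (Finset.univ.filter fun x => f x = f b) = {b, b + 1} := by
      ext x
      simp [hfib b x]
    rw [h, Finset.card_insert_of_notMem (by simp [hb_ne b]), Finset.card_singleton]
  have hq : Fintype.card F = 2 * (Finset.univ.image f).card := by
    have h := Finset.card_eq_sum_card_image f (Finset.univ : Finset F)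
    rw [Finset.card_univ] at h
    rw [h, Finset.sum_congr rfl hcard_fib, Finset.sum_const, smul_eq_mul, mul_comm]
  have himg : (Finset.univ.image f).card = 2 ^ (n - 1) := by
    have h22 : 2 * (Finset.univ.image f).card = 2 * 2 ^ (n - 1) := by
      rw [← hq, hcard, ← pow_succ']
      congr 1
      omega
    exact Nat.eq_of_mul_eq_mul_left two_pos h22
  set ST : Finset F := Finset.univ.filter fun x => Tr x = 0 with hSTdef
  have himg_sub : Finset.univ.image f ⊆ ST := by
    intro y hy
    obtain ⟨b, -, rfl⟩ := Finset.mem_image.mp hy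
    simp only [hSTdef, Finset.mem_filter, Finset.mem_univ, true_and]
    exact hAS b
  -- polynomial bound on the trace-zero set
  set p : Polynomial F := ∑ i ∈ Finset.range n, X ^ 2 ^ i with hpdef
  have hn1 : 1 ≤ n := by omega
  have hpc : p.coeff 1 = 1 := by
    rw [hpdef, Polynomial.finset_sum_coeff]
    rw [Finset.sum_eq_single 0]
    · simp
    · intro i hi hi0
      rw [Polynomial.coeff_X_pow]
      have : (2:ℕ) ^ i ≠ 1 := by
        have : 1 < 2 ^ i := Nat.one_lt_two_pow hi0
        omega
      simp [Ne.symm this]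
    · intro h
      exact absurd (Finset.mem_range.mpr (by omega)) h
  have hpne : p ≠ 0 := fun h => by simp [h] at hpc
  have hpdeg : p.natDegree ≤ 2 ^ (n - 1) := by
    rw [hpdef]
    apply Polynomial.natDegree_sum_le_of_forall_le
    intro i hi
    rw [Polynomial.natDegree_X_pow]
    exact Nat.pow_le_pow_right (by norm_num) (by have := Finset.mem_range.mp hi; omega)
  have hST_sub : ST ⊆ p.roots.toFinset := by
    intro x hx
    simp only [hSTdef, Finset.mem_filter, Finset.mem_univ, true_and] at hx
    rw [Multiset.mem_toFinset, Polynomial.mem_roots hpne]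
    show p.eval x = 0
    rw [hpdef, Polynomial.eval_finset_sum]
    simpa using hx
  have hST_card : ST.card ≤ 2 ^ (n - 1) := by
    calc ST.card ≤ p.roots.toFinset.card := Finset.card_le_card hST_sub
      _ ≤ Multiset.card p.roots := Multiset.toFinset_card_le _
      _ ≤ p.natDegree := p.card_roots' 
      _ ≤ 2 ^ (n - 1) := hpdeg
  have heqST : Finset.univ.image f = ST :=
    Finset.eq_of_subset_of_card_le himg_sub (by rw [himg]; exact hST_card)
  -- irreducibility criterion
  have hmonic : (X ^ 2 + X + C a : Polynomial F).Monic := by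
    monicity!
  have hdeg : (X ^ 2 + X + C a : Polynomial F).natDegree = 2 := by
    compute_degree!
  rw [hmonic.irreducible_iff_roots_eq_zero_of_degree_le_three (by rw [hdeg]) (by rw [hdeg]; norm_num)]
  rw [Multiset.eq_zero_iff_forall_notMem]
  have hroot_iff : (∀ x : F, x ∉ (X ^ 2 + X + C a : Polynomial F).roots) ↔ ¬ ∃ b : F, f b = a := by
    constructor
    · rintro h ⟨b, hb⟩
      apply h b
      rw [Polynomial.mem_roots hmonic.ne_zero]
      show (X ^ 2 + X + C a : Polynomial F).eval b = 0
      simp only [Polynomial.eval_add, Polynomial.eval_pow, Polynomial.eval_X, Polynomial.eval_C]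
      simp only [hfdef] at hb
      linear_combination hb + a * h2
    · intro h x hx
      rw [Polynomial.mem_roots hmonic.ne_zero] at hx
      have hx' : x ^ 2 + x + a = 0 := by
        have := hx
        simpa [Polynomial.IsRoot] using this
      exact h ⟨x, by simp only [hfdef]; linear_combination hx' - a * h2 + a*h2 - a*h2⟩
  rw [hroot_iff]
  have hex_iff : (∃ b : F, f b = a) ↔ Tr a = 0 := by
    constructor
    · rintro ⟨b, rfl⟩
      exact hAS b
    · intro hTa
      have : a ∈ ST := by
        simp only [hSTdef, Finset.mem_filter, Finset.mem_univ, true_and]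
        exact hTa
      rw [← heqST] at this
      obtain ⟨b, -, hb⟩ := Finset.mem_image.mp this
      exact ⟨b, hb⟩
  rw [hex_iff]
  have hTa : Tr a = (k : F) := htrace k
  rw [hTa]
  rw [CharP.cast_eq_zero_iff F 2 k]
  rw [Nat.odd_iff]
  omega
end

section
/- If K is a hyperfocused k-arc in a projective plane (a k-arc all of whose secants meet a fixed external line in exactly k−1 points), then k is even. -/
open Configuration

open Configuration.HasLines (mkLine mkLine_ax)
open Configuration.HasPoints (mkPoint mkPoint_ax)
open Configuration.Nondegenerate (eq_or_eq)

/-- A finset admitting a fixed-point-free involution has even cardinality. -/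
lemma even_card_of_invol {α : Type*} [DecidableEq α] (s : Finset α) (f : α → α)
    (hmem : ∀ p ∈ s, f p ∈ s) (hinv : ∀ p ∈ s, f (f p) = p) (hne : ∀ p ∈ s, f p ≠ p) :
    Even s.card := by
  induction s using Finset.strongInduction with
  | _ s ih =>
    rcases s.eq_empty_or_nonempty with rfl | ⟨p, hp⟩
    · simp
    · have hfp : f p ∈ s := hmem p hp
      have hpfp : p ≠ f p := (hne p hp).symm
      have hts : ({p, f p} : Finset α) ⊆ s := by
        intro y hy
        rcases Finset.mem_insert.mp hy with rfl | hy
        · exact hp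
        · simpa using Finset.mem_singleton.mp hy ▸ hfp
      have hsub : s \ {p, f p} ⊂ s :=
        Finset.sdiff_ssubset hts ⟨p, by simp⟩
      have h2 : ({p, f p} : Finset α).card = 2 := Finset.card_pair hpfp
      have heven : Even (s \ {p, f p}).card := by
        refine ih _ hsub ?_ ?_ ?_
        · intro q hq
          obtain ⟨hqs, hqn⟩ := Finset.mem_sdiff.mp hq
          simp only [Finset.mem_insert, Finset.mem_singleton, not_or] at hqn
          refine Finset.mem_sdiff.mpr ⟨hmem q hqs, ?_⟩
          simp only [Finset.mem_insert, Finset.mem_singleton, not_or]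
          constructor
          · intro h
            exact hqn.2 (by rw [← hinv q hqs, h])
          · intro h
            have : f (f q) = f (f p) := by rw [h]
            rw [hinv q hqs, hinv p hp] at this
            exact hqn.1 this
        · intro q hq; exact hinv q (Finset.mem_sdiff.mp hq).1
        · intro q hq; exact hne q (Finset.mem_sdiff.mp hq).1
      have hcard : s.card = (s \ {p, f p}).card + 2 := by
        rw [Finset.card_sdiff_of_subset hts, h2]
        have := Finset.card_le_card hts
        omega
      rw [hcard]
      exact heven.add (by decide)

theorem even_of_hyperfocused {P L : Type*} [Membership P L] [ProjectivePlane P L]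
    (k : ℕ) (hk : 2 ≤ k) (K : Finset P) (hcard : K.card = k)
    (harc : ∀ p ∈ K, ∀ q ∈ K, ∀ r ∈ K, p ≠ q → q ≠ r → p ≠ r →
      ∀ l : L, ¬(p ∈ l ∧ q ∈ l ∧ r ∈ l))
    (ℓ : L) (hext : ∀ p ∈ K, p ∉ ℓ)
    (hfocus : {x : P | x ∈ ℓ ∧ ∃ p ∈ K, ∃ q ∈ K, ∃ h : p ≠ q,
      x ∈ HasLines.mkLine (L := L) h}.ncard = k - 1) :
    Even k := by
  classical
  set S := {x : P | x ∈ ℓ ∧ ∃ p ∈ K, ∃ q ∈ K, ∃ h : p ≠ q,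
      x ∈ HasLines.mkLine (L := L) h} with hSdef
  have hSnz : S.ncard ≠ 0 := by rw [hfocus]; omega
  have hSfin : S.Finite := Set.finite_of_ncard_ne_zero hSnz
  obtain ⟨x, hxS⟩ := Set.nonempty_of_ncard_ne_zero hSnz
  have hxℓ : x ∈ ℓ := hxS.1
  -- any two distinct points determine a unique line
  have line_unique : ∀ {p q : P} {l₁ l₂ : L}, p ≠ q → p ∈ l₁ → q ∈ l₁ → p ∈ l₂ → q ∈ l₂ →
      l₁ = l₂ := by
    intro p q l₁ l₂ hpq h1 h2 h3 h4
    exact (eq_or_eq h1 h2 h3 h4).resolve_left hpq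
  -- uniqueness of the partner of p through x
  have huniq : ∀ p ∈ K, ∀ q ∈ K, ∀ q' ∈ K, ∀ (h : p ≠ q) (h' : p ≠ q'),
      x ∈ mkLine (L := L) h → x ∈ mkLine (L := L) h' → q = q' := by
    intro p hp q hq q' hq' h h' hx1 hx2
    have hxp : x ≠ p := fun he => hext p hp (he ▸ hxℓ)
    have hll : mkLine (L := L) h = mkLine (L := L) h' :=
      line_unique hxp hx1 (mkLine_ax h).1 hx2 (mkLine_ax h').1
    by_contra hqq'
    exact harc p hp q hq q' hq' h hqq' h' (mkLine (L := L) h)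
      ⟨(mkLine_ax h).1, (mkLine_ax h).2, hll ▸ (mkLine_ax h').2⟩
  -- existence of the partner of p through x
  have hexists : ∀ p ∈ K, ∃ q, ∃ hq : q ∈ K, ∃ h : p ≠ q, x ∈ mkLine (L := L) h := by
    intro p hp
    have hpℓ : p ∉ ℓ := hext p hp
    -- the line through p and q ∈ K.erase p is not ℓ
    have hlne : ∀ {q : P} (h : p ≠ q), mkLine (L := L) h ≠ ℓ := by
      intro q h he
      exact hpℓ (he ▸ (mkLine_ax h).1)
    -- map each q to the intersection of line pq with ℓ
    set T : Finset P := hSfin.toFinset with hTdef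
    have hTS : ∀ y, y ∈ T ↔ y ∈ S := fun y => hSfin.mem_toFinset
    have hTcard : T.card = k - 1 := by
      rw [hTdef, ← Set.ncard_eq_toFinset_card S hSfin, hfocus]
    have hscard : (K.erase p).card = k - 1 := by
      rw [Finset.card_erase_of_mem hp, hcard]
    have key := Finset.surj_on_of_inj_on_of_card_le
      (s := K.erase p) (t := T)
      (fun q hq => mkPoint (hlne (Finset.ne_of_mem_erase hq).symm))
      ?_ ?_ (by omega)
    · obtain ⟨q, hq, hxq⟩ := key x ((hTS x).mpr hxS)
      refine ⟨q, Finset.mem_of_mem_erase hq, (Finset.ne_of_mem_erase hq).symm, ?_⟩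
      rw [hxq]
      exact (mkPoint_ax (hlne (Finset.ne_of_mem_erase hq).symm)).1
    · -- maps into T
      intro q hq
      have hql : q ∈ K := Finset.mem_of_mem_erase hq
      have h : p ≠ q := (Finset.ne_of_mem_erase hq).symm
      refine (hTS _).mpr ⟨(mkPoint_ax (hlne h)).2, p, hp, q, hql, h, (mkPoint_ax (hlne h)).1⟩
    · -- injective on K.erase p
      intro q₁ q₂ hq₁ hq₂ he
      have h1 : p ≠ q₁ := (Finset.ne_of_mem_erase hq₁).symm
      have h2 : p ≠ q₂ := (Finset.ne_of_mem_erase hq₂).symm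
      set y := mkPoint (P := P) (hlne h1) with hy
      have hy1 : y ∈ mkLine (L := L) h1 := (mkPoint_ax (hlne h1)).1
      have hyℓ : y ∈ ℓ := (mkPoint_ax (hlne h1)).2
      have hy2 : y ∈ mkLine (L := L) h2 := by
        rw [he]; exact (mkPoint_ax (hlne h2)).1
      have hyp : y ≠ p := fun hyp => hpℓ (hyp ▸ hyℓ)
      have hll : mkLine (L := L) h1 = mkLine (L := L) h2 :=
        line_unique hyp hy1 (mkLine_ax h1).1 hy2 (mkLine_ax h2).1
      by_contra hne
      exact harc p hp q₁ (Finset.mem_of_mem_erase hq₁) q₂ (Finset.mem_of_mem_erase hq₂)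
        h1 hne h2 (mkLine (L := L) h1)
        ⟨(mkLine_ax h1).1, (mkLine_ax h1).2, hll ▸ (mkLine_ax h2).2⟩
  -- lines through p,q and q,p coincide
  have mkLine_symm : ∀ {p q : P} (h : p ≠ q),
      mkLine (L := L) h = mkLine (L := L) h.symm := by
    intro p q h
    exact line_unique h (mkLine_ax h).1 (mkLine_ax h).2 (mkLine_ax h.symm).2 (mkLine_ax h.symm).1
  -- choose the partner function
  choose g hgK hgne hgx using hexists
  set f : P → P := fun p => if hp : p ∈ K then g p hp else p with hfdef
  have hfK : ∀ p (hp : p ∈ K), f p = g p hp := by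
    intro p hp; simp [hfdef, hp]
  have hmem : ∀ p ∈ K, f p ∈ K := by
    intro p hp; rw [hfK p hp]; exact hgK p hp
  have hne : ∀ p ∈ K, f p ≠ p := by
    intro p hp; rw [hfK p hp]; exact (hgne p hp).symm
  have hinv : ∀ p ∈ K, f (f p) = p := by
    intro p hp
    have hq : f p ∈ K := hmem p hp
    rw [hfK (f p) hq]
    have h1 : x ∈ mkLine (L := L) (hgne (f p) hq) := hgx (f p) hq
    have hpf : p ≠ f p := by rw [hfK p hp]; exact hgne p hp
    have hfp : f p = g p hp := hfK p hp
    have hmk : mkLine (L := L) hpf.symm = mkLine (L := L) (hgne p hp) :=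
      line_unique hpf (mkLine_ax hpf.symm).2 (mkLine_ax hpf.symm).1
        (mkLine_ax (hgne p hp)).1 (by rw [hfp]; exact (mkLine_ax (hgne p hp)).2)
    have h2 : x ∈ mkLine (L := L) hpf.symm := by rw [hmk]; exact hgx p hp
    exact huniq (f p) hq (g (f p) hq) (hgK (f p) hq) p hp (hgne (f p) hq)
      hpf.symm h1 h2
  have := even_card_of_invol K f hmem hinv hne
  rwa [hcard] at this
end

section
/- A hyperfocused k-arc determines a proper 1-factorization of the complete graph K_k: for each of the k−1 focus points, the set of secants through that point induces a perfect matching on the arc, and these k−1 matchings partition the edge set of the complete graph on the arc points. -/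
open Configuration

set_option maxHeartbeats 1000000 in
theorem hyperfocused_one_factorization {P L : Type*} [Membership P L] [ProjectivePlane P L]
    (k : ℕ) (hk : 2 ≤ k) (K : Finset P) (hcard : K.card = k)
    (harc : ∀ p ∈ K, ∀ q ∈ K, ∀ r ∈ K, p ≠ q → q ≠ r → p ≠ r →
      ∀ l : L, ¬(p ∈ l ∧ q ∈ l ∧ r ∈ l))
    (ℓ : L) (hext : ∀ p ∈ K, p ∉ ℓ)
    (S : Set P)
    (hS : S = {x : P | x ∈ ℓ ∧ ∃ p ∈ K, ∃ q ∈ K, ∃ h : p ≠ q,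
      x ∈ HasLines.mkLine (L := L) h})
    (hfocus : S.ncard = k - 1) :
    (∀ s ∈ S, ∀ p ∈ K, ∃! q : P, q ∈ K ∧ ∃ h : q ≠ p,
        s ∈ HasLines.mkLine (L := L) h) ∧
      (∀ p ∈ K, ∀ q ∈ K, ∀ h : p ≠ q, ∃! s : P, s ∈ S ∧
        s ∈ HasLines.mkLine (L := L) h) := by
  classical
  -- any line through two distinct points is the canonical one
  have line_eq : ∀ {p q : P} (h : p ≠ q) {l : L}, p ∈ l → q ∈ l →
      l = HasLines.mkLine (L := L) h := by
    intro p q h l hp hq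
    exact (Nondegenerate.eq_or_eq hp hq (HasLines.mkLine_ax h).1
      (HasLines.mkLine_ax h).2).resolve_left h
  -- Part 2
  have part2 : ∀ p ∈ K, ∀ q ∈ K, ∀ h : p ≠ q, ∃! s : P, s ∈ S ∧
      s ∈ HasLines.mkLine (L := L) h := by
    intro p hp q hq h
    have hne : HasLines.mkLine (L := L) h ≠ ℓ := fun he =>
      hext p hp (he ▸ (HasLines.mkLine_ax h).1)
    refine ⟨HasPoints.mkPoint hne, ⟨?_, (HasPoints.mkPoint_ax hne).1⟩, ?_⟩
    · rw [hS]
      exact ⟨(HasPoints.mkPoint_ax hne).2, p, hp, q, hq, h, (HasPoints.mkPoint_ax hne).1⟩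
    · rintro s ⟨hsS, hsl⟩
      have hsℓ : s ∈ ℓ := by rw [hS] at hsS; exact hsS.1
      exact (Nondegenerate.eq_or_eq hsl (HasPoints.mkPoint_ax hne).1 hsℓ
        (HasPoints.mkPoint_ax hne).2).resolve_right hne
  -- uniqueness of the partner
  have uniq1 : ∀ s ∈ ℓ, ∀ p ∈ K, ∀ q1 ∈ K, ∀ q2 ∈ K, ∀ h1 : q1 ≠ p, ∀ h2 : q2 ≠ p,
      s ∈ HasLines.mkLine (L := L) h1 → s ∈ HasLines.mkLine (L := L) h2 → q1 = q2 := by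
    intro s hsℓ p hp q1 hq1 q2 hq2 h1 h2 hs1 hs2
    have hsp : s ≠ p := fun he => hext p hp (he ▸ hsℓ)
    have hll : HasLines.mkLine (L := L) h1 = HasLines.mkLine (L := L) h2 :=
      (Nondegenerate.eq_or_eq hs1 (HasLines.mkLine_ax h1).2 hs2
        (HasLines.mkLine_ax h2).2).resolve_left hsp
    by_contra hne
    exact harc q1 hq1 q2 hq2 p hp hne h2 h1 (HasLines.mkLine (L := L) h1)
      ⟨(HasLines.mkLine_ax h1).1, hll ▸ (HasLines.mkLine_ax h2).1, (HasLines.mkLine_ax h1).2⟩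
  have hSℓ : ∀ s ∈ S, s ∈ ℓ := by intro s hs; rw [hS] at hs; exact hs.1
  -- finiteness of S
  have hSfin : S.Finite := by
    by_contra hinf
    rw [Set.Infinite.ncard hinf] at hfocus
    omega
  set Sfin := hSfin.toFinset with hSfin_def
  have hScard : Sfin.card = k - 1 := by
    rw [hSfin_def, ← Set.ncard_eq_toFinset_card S hSfin]; exact hfocus
  -- the set of ordered pairs of distinct arc points
  set E : Finset (P × P) := (K ×ˢ K).filter (fun x => x.1 ≠ x.2) with hE_def
  have hEmem : ∀ x : P × P, x ∈ E ↔ x.1 ∈ K ∧ x.2 ∈ K ∧ x.1 ≠ x.2 := by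
    intro x
    simp [hE_def, Finset.mem_filter, Finset.mem_product, and_assoc]
  have hEcard : E.card = k * k - k := by
    have himg : (K ×ˢ K).filter (fun x : P × P => x.1 = x.2) =
        K.image (fun p => (p, p)) := by
      ext x
      simp only [Finset.mem_filter, Finset.mem_product, Finset.mem_image]
      constructor
      · rintro ⟨⟨h1, _⟩, h3⟩
        exact ⟨x.1, h1, by cases x; simp_all⟩
      · rintro ⟨p, hp, rfl⟩
        exact ⟨⟨hp, hp⟩, rfl⟩
    have hdiag : ((K ×ˢ K).filter (fun x : P × P => x.1 = x.2)).card = k := by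
      rw [himg, Finset.card_image_of_injective _ (fun a b hab => by simpa using hab), hcard]
    have hsplit : ((K ×ˢ K).filter (fun x : P × P => x.1 = x.2)).card + E.card
        = (K ×ˢ K).card := by
      rw [hE_def]
      exact Finset.card_filter_add_card_filter_not (fun x : P × P => x.1 = x.2)
    rw [Finset.card_product, hcard, hdiag] at hsplit
    omega
  -- fibers over focus points
  set Fib : P → Finset (P × P) :=
    fun s => E.filter (fun x => ∃ l : L, s ∈ l ∧ x.1 ∈ l ∧ x.2 ∈ l) with hFib_def
  -- each fiber maps injectively into K via fst
  have hFst : ∀ s ∈ Sfin, Set.InjOn Prod.fst (Fib s : Set (P × P)) := by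
    intro s hs x hx y hy hxy
    simp only [hFib_def, Finset.coe_filter, Set.mem_setOf_eq] at hx hy
    obtain ⟨hxE, l, hsl, h1l, h2l⟩ := hx
    obtain ⟨hyE, m, hsm, h1m, h2m⟩ := hy
    rw [hEmem] at hxE hyE
    have hsℓ' : s ∈ ℓ := hSℓ s (hSfin.mem_toFinset.mp hs)
    have h1 : x.2 ≠ x.1 := (hxE.2.2).symm
    have h2 : y.2 ≠ y.1 := (hyE.2.2).symm
    have hl1 : l = HasLines.mkLine (L := L) h1 := line_eq h1 h2l h1l
    have hl2 : m = HasLines.mkLine (L := L) h2 := line_eq h2 h2m h1m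
    have hx2y2 : x.2 = y.2 := by
      refine uniq1 s hsℓ' x.1 hxE.1 x.2 hxE.2.1 y.2 hyE.2.1 h1 (hxy ▸ h2) ?_ ?_
      · exact hl1 ▸ hsl
      · exact (line_eq (hxy ▸ h2) h2m (hxy ▸ h1m)) ▸ hsm
    exact Prod.ext hxy hx2y2
  have hFibK : ∀ s, ∀ x ∈ Fib s, x.1 ∈ K := by
    intro s x hx
    simp only [hFib_def, Finset.mem_filter] at hx
    exact ((hEmem x).mp hx.1).1
  have hle : ∀ s ∈ Sfin, (Fib s).card ≤ k := by
    intro s hs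
    calc (Fib s).card ≤ K.card :=
          Finset.card_le_card_of_injOn Prod.fst (fun x hx => hFibK s x hx) (hFst s hs)
      _ = k := hcard
  -- E is the disjoint union of the fibers
  have hcover : E = Sfin.biUnion Fib := by
    ext x
    constructor
    · intro hx
      have hx' := (hEmem x).mp hx
      obtain ⟨s, ⟨hsS, hsl⟩, _⟩ := part2 x.1 hx'.1 x.2 hx'.2.1 hx'.2.2
      refine Finset.mem_biUnion.mpr ⟨s, hSfin.mem_toFinset.mpr hsS, ?_⟩
      simp only [hFib_def, Finset.mem_filter]
      exact ⟨hx, HasLines.mkLine hx'.2.2, hsl, (HasLines.mkLine_ax hx'.2.2).1,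
        (HasLines.mkLine_ax hx'.2.2).2⟩
    · intro hx
      obtain ⟨s, _, hxs⟩ := Finset.mem_biUnion.mp hx
      exact (Finset.mem_filter.mp hxs).1
  have hdisj : ∀ s ∈ Sfin, ∀ t ∈ Sfin, s ≠ t → Disjoint (Fib s) (Fib t) := by
    intro s hs t ht hst
    rw [Finset.disjoint_left]
    intro x hxs hxt
    simp only [hFib_def, Finset.mem_filter] at hxs hxt
    obtain ⟨hxE, l, hsl, h1l, h2l⟩ := hxs
    obtain ⟨_, m, htm, h1m, h2m⟩ := hxt
    rw [hEmem] at hxE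
    have hlm : l = m :=
      (Nondegenerate.eq_or_eq h1l h2l h1m h2m).resolve_left hxE.2.2
    have hlℓ : l ≠ ℓ := fun he => hext x.1 hxE.1 (he ▸ h1l)
    exact hst ((Nondegenerate.eq_or_eq hsl (hlm ▸ htm) (hSℓ s (hSfin.mem_toFinset.mp hs))
      (hSℓ t (hSfin.mem_toFinset.mp ht))).resolve_right hlℓ)
  have hsum : ∑ s ∈ Sfin, (Fib s).card = k * k - k := by
    rw [← Finset.card_biUnion hdisj, ← hcover, hEcard]
  -- each fiber has exactly k elements
  have hFibcard : ∀ s ∈ Sfin, (Fib s).card = k := by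
    intro s hs
    by_contra hne
    have hlt : (Fib s).card < k := lt_of_le_of_ne (hle s hs) hne
    have hstrict : ∑ t ∈ Sfin, (Fib t).card < ∑ t ∈ Sfin, k :=
      Finset.sum_lt_sum (fun t ht => hle t ht) ⟨s, hs, hlt⟩
    rw [hsum, Finset.sum_const, hScard, smul_eq_mul, Nat.sub_mul, one_mul] at hstrict
    omega
  -- existence of the partner: fst is surjective from the fiber onto K
  have hsurj : ∀ s ∈ Sfin, ∀ p ∈ K, ∃ x ∈ Fib s, x.1 = p := by
    intro s hs p hp
    have himg : (Fib s).image Prod.fst = K := by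
      apply Finset.eq_of_subset_of_card_le
      · intro a ha
        obtain ⟨x, hx, rfl⟩ := Finset.mem_image.mp ha
        exact hFibK s x hx
      · rw [Finset.card_image_of_injOn (hFst s hs), hFibcard s hs, hcard]
    have : p ∈ (Fib s).image Prod.fst := himg ▸ hp
    obtain ⟨x, hx, hxp⟩ := Finset.mem_image.mp this
    exact ⟨x, hx, hxp⟩
  constructor
  · intro s hsS p hp
    have hs : s ∈ Sfin := hSfin.mem_toFinset.mpr hsS
    obtain ⟨x, hx, hxp⟩ := hsurj s hs p hp
    simp only [hFib_def, Finset.mem_filter] at hx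
    obtain ⟨hxE, l, hsl, h1l, h2l⟩ := hx
    rw [hEmem] at hxE
    have hqp : x.2 ≠ p := hxp ▸ hxE.2.2.symm
    refine ⟨x.2, ⟨hxE.2.1, hqp, ?_⟩, ?_⟩
    · exact (line_eq hqp h2l (hxp ▸ h1l)) ▸ hsl
    · rintro q ⟨hqK, hq, hsq⟩
      have hsm : s ∈ HasLines.mkLine (L := L) hqp :=
        (line_eq hqp h2l (hxp ▸ h1l)) ▸ hsl
      exact uniq1 s (hSℓ s hsS) p hp q hqK x.2 hxE.2.1 hq hqp hsq hsm
  · exact part2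
end

section
/- In PG(2,q), let A,B,C,D,E,F,G,H be points of an arc and ℓ a line such that AB∩EF, AC∩EG, BC∩FG, BD∩FH, CD∩GH all lie on ℓ, with triangles ABC, EFG and BCD, FGH in general position. Then AD∩EH also lies on ℓ. -/
private lemma eq_three {𝔽 : Type*} [Field 𝔽] {u₁ u₂ u₃ : Fin 3 → 𝔽}
    (h : LinearIndependent 𝔽 ![u₁, u₂, u₃]) {a b c : 𝔽}
    (hs : a • u₁ + b • u₂ + c • u₃ = 0) : a = 0 ∧ b = 0 ∧ c = 0 := by
  have := Fintype.linearIndependent_iff.mp h ![a, b, c] ?_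
  · exact ⟨this 0, this 1, this 2⟩
  · simpa [Fin.sum_univ_three] using hs

private lemma secant_dir {𝔽 : Type*} [Field 𝔽] {u w x : Fin 3 → 𝔽}
    (φ : (Fin 3 → 𝔽) →ₗ[𝔽] 𝔽) (hu : φ u ≠ 0) (hw : φ w ≠ 0)
    (hx : x ≠ 0) (hmem : x ∈ Submodule.span 𝔽 {u, w}) (hφx : φ x = 0) :
    ∃ c : 𝔽, c ≠ 0 ∧ x = c • ((φ u)⁻¹ • u - (φ w)⁻¹ • w) := by
  obtain ⟨m, n, hmn⟩ := Submodule.mem_span_pair.mp hmem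
  have hphi : m * φ u + n * φ w = 0 := by
    have := congrArg φ hmn
    simpa [map_add, map_smul, hφx, smul_eq_mul] using this
  refine ⟨m * φ u, ?_, ?_⟩
  · intro h0
    have hm : m = 0 := by
      rcases mul_eq_zero.mp h0 with h | h
      · exact h
      · exact absurd h hu
    have hn : n = 0 := by
      have : n * φ w = 0 := by rw [hm] at hphi; simpa using hphi
      rcases mul_eq_zero.mp this with h | h
      · exact h
      · exact absurd h hw
    apply hx
    rw [← hmn, hm, hn]; simp
  · have e1 : m * φ u * (φ u)⁻¹ = m := by field_simp
    have e2 : m * φ u * (φ w)⁻¹ = -n := by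
      field_simp
      linear_combination hphi
    rw [smul_sub, smul_smul, smul_smul, e1, e2, neg_smul, sub_neg_eq_add]
    exact hmn.symm

theorem corresponding_K4_edges {𝔽 : Type*} [Field 𝔽] [Fintype 𝔽]
    (v : Fin 8 → (Fin 3 → 𝔽))
    -- v 0 = A, v 1 = B, v 2 = C, v 3 = D, v 4 = E, v 5 = F, v 6 = G, v 7 = H
    (harc : ∀ i j k : Fin 8, i ≠ j → j ≠ k → i ≠ k →
      LinearIndependent 𝔽 ![v i, v j, v k])
    (φ : (Fin 3 → 𝔽) →ₗ[𝔽] 𝔽) (hφ : φ ≠ 0) (hext : ∀ i, φ (v i) ≠ 0)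
    (h1 : ∃ x, x ≠ 0 ∧ x ∈ Submodule.span 𝔽 {v 0, v 1} ⊓ Submodule.span 𝔽 {v 4, v 5} ∧ φ x = 0)
    (h2 : ∃ x, x ≠ 0 ∧ x ∈ Submodule.span 𝔽 {v 0, v 2} ⊓ Submodule.span 𝔽 {v 4, v 6} ∧ φ x = 0)
    (h3 : ∃ x, x ≠ 0 ∧ x ∈ Submodule.span 𝔽 {v 1, v 2} ⊓ Submodule.span 𝔽 {v 5, v 6} ∧ φ x = 0)
    (h4 : ∃ x, x ≠ 0 ∧ x ∈ Submodule.span 𝔽 {v 1, v 3} ⊓ Submodule.span 𝔽 {v 5, v 7} ∧ φ x = 0)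
    (h5 : ∃ x, x ≠ 0 ∧ x ∈ Submodule.span 𝔽 {v 2, v 3} ⊓ Submodule.span 𝔽 {v 6, v 7} ∧ φ x = 0) :
    ∃ x, x ≠ 0 ∧ x ∈ Submodule.span 𝔽 {v 0, v 3} ⊓ Submodule.span 𝔽 {v 4, v 7} ∧ φ x = 0 := by
  classical
  set w : Fin 8 → (Fin 3 → 𝔽) := fun i => (φ (v i))⁻¹ • v i with hw
  -- each hypothesis gives a scalar relation between the w-differences
  have key : ∀ i j k l : Fin 8,
      (∃ x, x ≠ 0 ∧ x ∈ Submodule.span 𝔽 {v i, v j} ⊓ Submodule.span 𝔽 {v k, v l} ∧ φ x = 0) →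
      ∃ a : 𝔽, w i - w j = a • (w k - w l) := by
    rintro i j k l ⟨x, hx0, hx12, hφx⟩
    obtain ⟨hx1, hx2⟩ := Submodule.mem_inf.mp hx12
    obtain ⟨c, hc, hc2⟩ := secant_dir φ (hext i) (hext j) hx0 hx1 hφx
    obtain ⟨d, _, hd2⟩ := secant_dir φ (hext k) (hext l) hx0 hx2 hφx
    refine ⟨c⁻¹ * d, ?_⟩
    have hcd : c • (w i - w j) = d • (w k - w l) := by
      rw [hw]; rw [← hc2, ← hd2]
    calc w i - w j = c⁻¹ • (c • (w i - w j)) := (inv_smul_smul₀ hc _).symm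
      _ = c⁻¹ • (d • (w k - w l)) := by rw [hcd]
      _ = (c⁻¹ * d) • (w k - w l) := smul_smul _ _ _
  -- linear independence transfers to the w's
  have cancel : ∀ i j k : Fin 8, i ≠ j → j ≠ k → i ≠ k → ∀ p q r : 𝔽,
      p • w i + q • w j + r • w k = 0 → p = 0 ∧ q = 0 ∧ r = 0 := by
    intro i j k hij hjk hik p q r hs
    have hs' : (p * (φ (v i))⁻¹) • v i + (q * (φ (v j))⁻¹) • v j
        + (r * (φ (v k))⁻¹) • v k = 0 := by
      simpa [hw, smul_smul] using hs
    obtain ⟨e1, e2, e3⟩ := eq_three (harc i j k hij hjk hik) hs'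
    refine ⟨?_, ?_, ?_⟩
    · exact (mul_eq_zero.mp e1).resolve_right (inv_ne_zero (hext i))
    · exact (mul_eq_zero.mp e2).resolve_right (inv_ne_zero (hext j))
    · exact (mul_eq_zero.mp e3).resolve_right (inv_ne_zero (hext k))
  obtain ⟨a, ea⟩ := key 0 1 4 5 h1
  obtain ⟨b, eb⟩ := key 0 2 4 6 h2
  obtain ⟨c, ec⟩ := key 1 2 5 6 h3
  obtain ⟨d, ed⟩ := key 1 3 5 7 h4
  obtain ⟨e, ee⟩ := key 2 3 6 7 h5
  -- first Desargues: a = b = c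
  have hsum1 : (a - b) • w 4 + (c - a) • w 5 + (b - c) • w 6 = 0 := by
    have h0 : a • (w 4 - w 5) - b • (w 4 - w 6) + c • (w 5 - w 6) = 0 := by
      rw [← ea, ← eb, ← ec]; abel
    linear_combination (norm := module) h0
  obtain ⟨hab, hca, _⟩ := cancel 4 5 6 (by decide) (by decide) (by decide) _ _ _ hsum1
  -- second Desargues: c = d = e
  have hsum2 : (c - d) • w 5 + (e - c) • w 6 + (d - e) • w 7 = 0 := by
    have h0 : c • (w 5 - w 6) - d • (w 5 - w 7) + e • (w 6 - w 7) = 0 := by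
      rw [← ec, ← ed, ← ee]; abel
    linear_combination (norm := module) h0
  obtain ⟨hcd, _, _⟩ := cancel 5 6 7 (by decide) (by decide) (by decide) _ _ _ hsum2
  have had : a = d := by
    have h1 : a = c := (sub_eq_zero.mp hca).symm
    have h2 : c = d := sub_eq_zero.mp hcd
    rw [h1, h2]
  -- conclusion
  have hmain : w 0 - w 3 = a • (w 4 - w 7) := by
    have hsplit : w 0 - w 3 = (w 0 - w 1) + (w 1 - w 3) := by abel
    rw [hsplit, ea, ed, ← had]
    linear_combination (norm := module) (rfl : (0 : Fin 3 → 𝔽) = 0)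
  refine ⟨w 0 - w 3, ?_, Submodule.mem_inf.mpr ⟨?_, ?_⟩, ?_⟩
  · intro h0
    have hs : (1 : 𝔽) • w 0 + (-1 : 𝔽) • w 3 + (0 : 𝔽) • w 1 = 0 := by
      simpa [sub_eq_add_neg] using h0
    obtain ⟨h1, _, _⟩ := cancel 0 3 1 (by decide) (by decide) (by decide) _ _ _ hs
    exact one_ne_zero h1
  · apply Submodule.sub_mem
    · exact Submodule.smul_mem _ _ (Submodule.subset_span (by simp))
    · exact Submodule.smul_mem _ _ (Submodule.subset_span (by simp))
  · rw [hmain]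
    apply Submodule.smul_mem
    apply Submodule.sub_mem
    · exact Submodule.smul_mem _ _ (Submodule.subset_span (by simp))
    · exact Submodule.smul_mem _ _ (Submodule.subset_span (by simp))
  · simp [hw, map_sub, map_smul, smul_eq_mul, inv_mul_cancel₀ (hext 0), inv_mul_cancel₀ (hext 3)]
end

section
/- In the projective plane over a field, six distinct points lie on a conic if and only if for the hexagon they form, the three intersection points of pairs of opposite sides are collinear (Pascal's theorem and its converse). -/
/-!
The meet of the lines `ab` and `cd` of the projective plane is `(a × b) × (c × d)`, so the three
Pascal points are collinear iff their triple product vanishes. That triple product is a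
polynomial of degree two in each of the six points, and it is identically equal to the
determinant of the `6 × 6` matrix whose rows are the quadratic monomials of the points; this
determinant vanishes iff some nonzero ternary quadratic form vanishes at all six points. Such a
conic cannot be a pair of lines: one of the lines would contain three of the points.
-/

open Matrix QuadraticMap

section CrossProduct

variable {𝔽 : Type*} [Field 𝔽]

theorem linearIndependent_iff_triple_product_ne_zero {a b c : Fin 3 → 𝔽} :
    LinearIndependent 𝔽 ![a, b, c] ↔ a ⬝ᵥ b ⨯₃ c ≠ 0 := by
  rw [triple_product_eq_det, ← isUnit_iff_ne_zero]
  exact linearIndependent_rows_iff_isUnit.trans (isUnit_iff_isUnit_det _)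

theorem mem_span_pair_iff_cross_dotProduct_eq_zero {a b x : Fin 3 → 𝔽}
    (hab : LinearIndependent 𝔽 ![a, b]) :
    x ∈ Submodule.span 𝔽 {a, b} ↔ (a ⨯₃ b) ⬝ᵥ x = 0 := by
  have h := linearIndependent_finCons (x := x) (v := ![a, b]) (K := 𝔽)
  rw [range_cons_cons_empty] at h
  rw [dotProduct_comm, ← not_ne_iff, ← linearIndependent_iff_triple_product_ne_zero]
  exact ⟨fun hx hli => (h.mp hli).2 hx, fun hx => by_contra fun hx' => hx (h.mpr ⟨hab, hx'⟩)⟩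

theorem cross_cross_ne_zero {n c d : Fin 3 → 𝔽} (hcd : LinearIndependent 𝔽 ![c, d])
    (hc : n ⬝ᵥ c ≠ 0) : n ⨯₃ (c ⨯₃ d) ≠ 0 := by
  rw [cross_cross_eq_smul_sub_smul', sub_eq_add_neg, ← neg_smul]
  intro h
  have hcn := (LinearIndependent.pair_iff.mp hcd _ _ h).2
  rw [neg_eq_zero, dotProduct_comm] at hcn
  exact hc hcn

theorem mem_span_singleton_cross_iff {n₁ n₂ x : Fin 3 → 𝔽} (h : n₁ ⨯₃ n₂ ≠ 0) :
    x ∈ 𝔽 ∙ (n₁ ⨯₃ n₂) ↔ n₁ ⬝ᵥ x = 0 ∧ n₂ ⬝ᵥ x = 0 := by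
  rw [Submodule.mem_span_singleton]
  constructor
  · rintro ⟨t, rfl⟩
    simp [dot_self_cross, dot_cross_self]
  · rintro ⟨h₁, h₂⟩
    have hdep : ¬LinearIndependent 𝔽 ![n₁ ⨯₃ n₂, x] := by
      rw [← crossProduct_ne_zero_iff_linearIndependent, not_ne_iff, cross_cross_eq_smul_sub_smul,
        h₁, h₂, zero_smul, zero_smul, sub_zero]
    simpa only [LinearIndependent.pair_iff' h, not_forall, not_not] using hdep

theorem span_pair_inf_span_pair_eq {a b c d : Fin 3 → 𝔽}
    (hab : LinearIndependent 𝔽 ![a, b]) (hcd : LinearIndependent 𝔽 ![c, d])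
    (hc : (a ⨯₃ b) ⬝ᵥ c ≠ 0) :
    Submodule.span 𝔽 {a, b} ⊓ Submodule.span 𝔽 {c, d} = 𝔽 ∙ ((a ⨯₃ b) ⨯₃ (c ⨯₃ d)) := by
  ext x
  rw [Submodule.mem_inf, mem_span_pair_iff_cross_dotProduct_eq_zero hab,
    mem_span_pair_iff_cross_dotProduct_eq_zero hcd,
    mem_span_singleton_cross_iff (cross_cross_ne_zero hcd hc)]

theorem exists_mem_span_singleton_not_linearIndependent_iff {x₀ y₀ z₀ : Fin 3 → 𝔽}
    (hx₀ : x₀ ≠ 0) (hy₀ : y₀ ≠ 0) (hz₀ : z₀ ≠ 0) :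
    (∃ x y z : Fin 3 → 𝔽, x ≠ 0 ∧ y ≠ 0 ∧ z ≠ 0 ∧
        x ∈ 𝔽 ∙ x₀ ∧ y ∈ 𝔽 ∙ y₀ ∧ z ∈ 𝔽 ∙ z₀ ∧ ¬LinearIndependent 𝔽 ![x, y, z]) ↔
      x₀ ⬝ᵥ y₀ ⨯₃ z₀ = 0 := by
  simp only [linearIndependent_iff_triple_product_ne_zero, not_not, Submodule.mem_span_singleton]
  constructor
  · rintro ⟨_, _, _, hx, hy, hz, ⟨s, rfl⟩, ⟨t, rfl⟩, ⟨u, rfl⟩, h⟩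
    simp only [map_smul, LinearMap.smul_apply, smul_dotProduct, dotProduct_smul,
      smul_eq_mul] at h
    simpa [left_ne_zero_of_smul hx, left_ne_zero_of_smul hy, left_ne_zero_of_smul hz] using h
  · intro h
    exact ⟨x₀, y₀, z₀, hx₀, hy₀, hz₀, ⟨1, one_smul _ _⟩, ⟨1, one_smul _ _⟩, ⟨1, one_smul _ _⟩, h⟩

end CrossProduct

section Veronese

variable {R : Type*} [CommRing R]

def veronese (x : Fin 3 → R) : Fin 6 → R :=
  ![x 0 * x 0, x 1 * x 1, x 2 * x 2, x 0 * x 1, x 0 * x 2, x 1 * x 2]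

set_option maxHeartbeats 1000000 in
theorem pascal_triple_product_eq_det_veronese (v : Fin 6 → Fin 3 → R) :
    ((v 0 ⨯₃ v 1) ⨯₃ (v 3 ⨯₃ v 4)) ⬝ᵥ
      ((v 1 ⨯₃ v 2) ⨯₃ (v 4 ⨯₃ v 5)) ⨯₃ ((v 2 ⨯₃ v 3) ⨯₃ (v 5 ⨯₃ v 0))
      = (Matrix.of fun i => veronese (v i)).det := by
  simp only [det_succ_row_zero, Fin.sum_univ_succ, det_unique, Fin.sum_univ_zero]
  simp only [dotProduct, cross_apply, Fin.sum_univ_three, veronese, of_apply, submatrix_apply,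
    Fin.succAbove, Fin.lt_def, Fin.castSucc_zero, Fin.castSucc_one, Fin.succ_zero_eq_one,
    Fin.succ_one_eq_two, Fin.reduceSucc, Fin.reduceCastSucc, Fin.default_eq_zero,
    Fin.coe_ofNat_eq_mod, Nat.reduceMod, Nat.reduceLT, Nat.reduceAdd, ↓reduceIte, cons_val,
    cons_val_zero, cons_val_one, Fin.isValue, lt_self_iff_false, Nat.lt_add_one, zero_lt_one]
  ring

def QuadraticForm.ofCoeffs (q : Fin 6 → R) : QuadraticForm R (Fin 3 → R) :=
  q 0 • proj 0 0 + q 1 • proj 1 1 + q 2 • proj 2 2 + q 3 • proj 0 1 + q 4 • proj 0 2 +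
    q 5 • proj 1 2

theorem QuadraticForm.ofCoeffs_apply (q : Fin 6 → R) (x : Fin 3 → R) :
    QuadraticForm.ofCoeffs q x = veronese x ⬝ᵥ q := by
  simp only [QuadraticForm.ofCoeffs, _root_.add_apply, _root_.smul_apply, proj_apply, smul_eq_mul,
    dotProduct, veronese, Fin.sum_univ_succ, cons_val_zero, cons_val_succ, Fin.succ_zero_eq_one,
    Fin.succ_one_eq_two, Fin.reduceSucc, Finset.univ_unique, Fin.default_eq_zero, cons_val_fin_one,
    Finset.sum_singleton]
  ring

def QuadraticForm.coeffs (Q : QuadraticForm R (Fin 3 → R)) : Fin 6 → R :=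
  ![Q (Pi.single 0 1), Q (Pi.single 1 1), Q (Pi.single 2 1),
    polar Q (Pi.single 0 1) (Pi.single 1 1), polar Q (Pi.single 0 1) (Pi.single 2 1),
    polar Q (Pi.single 1 1) (Pi.single 2 1)]

theorem QuadraticForm.apply_eq_veronese_dotProduct_coeffs (Q : QuadraticForm R (Fin 3 → R))
    (x : Fin 3 → R) : Q x = veronese x ⬝ᵥ Q.coeffs := by
  have hx : x = x 0 • Pi.single 0 1 + (x 1 • Pi.single 1 1 + x 2 • Pi.single 2 1) := by
    ext i; fin_cases i <;> simp
  conv_lhs => rw [hx, QuadraticMap.map_add (⇑Q), QuadraticMap.map_add (⇑Q)]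
  simp only [QuadraticMap.map_smul, polar_smul_left, polar_smul_right,
    polar_add_right, smul_eq_mul]
  simp only [dotProduct, veronese, QuadraticForm.coeffs, Fin.sum_univ_succ, cons_val_zero,
    cons_val_succ, Finset.univ_unique, Fin.default_eq_zero, cons_val_fin_one, Finset.sum_singleton]
  ring

theorem QuadraticForm.coeffs_ofCoeffs (q : Fin 6 → R) :
    (QuadraticForm.ofCoeffs q).coeffs = q := by
  ext i
  fin_cases i <;>
    simp [QuadraticForm.coeffs, polar, QuadraticForm.ofCoeffs_apply, veronese, dotProduct,
      Fin.sum_univ_succ]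

end Veronese

section Conics

variable {𝔽 : Type*} [Field 𝔽]

theorem exists_quadraticForm_ne_zero_vanishing_iff_det_eq_zero (v : Fin 6 → Fin 3 → 𝔽) :
    (∃ Q : QuadraticForm 𝔽 (Fin 3 → 𝔽), Q ≠ 0 ∧ ∀ i, Q (v i) = 0) ↔
      (Matrix.of fun i => veronese (v i)).det = 0 := by
  rw [← exists_mulVec_eq_zero_iff]
  constructor
  · rintro ⟨Q, hQ, hQv⟩
    refine ⟨Q.coeffs, fun h => hQ ?_, ?_⟩
    · ext x
      rw [Q.apply_eq_veronese_dotProduct_coeffs, h, dotProduct_zero]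
      rfl
    · ext i
      rw [Pi.zero_apply, ← hQv i, Q.apply_eq_veronese_dotProduct_coeffs]
      rfl
  · rintro ⟨q, hq, hMq⟩
    refine ⟨QuadraticForm.ofCoeffs q, fun h => hq ?_, fun i => ?_⟩
    · rw [← QuadraticForm.coeffs_ofCoeffs q, h]
      ext i
      fin_cases i <;> simp [QuadraticForm.coeffs, polar]
    · rw [QuadraticForm.ofCoeffs_apply]
      exact congrFun hMq i

theorem LinearMap.eq_zero_of_linearIndependent_of_card_eq_finrank {V W ι : Type*}
    [AddCommGroup V] [Module 𝔽 V] [FiniteDimensional 𝔽 V] [AddCommMonoid W] [Module 𝔽 W]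
    [Fintype ι] {u : ι → V} (hu : LinearIndependent 𝔽 u)
    (hcard : Fintype.card ι = Module.finrank 𝔽 V) {f : V →ₗ[𝔽] W} (hf : ∀ i, f (u i) = 0) :
    f = 0 :=
  LinearMap.ext_on_range (hu.span_eq_top_of_card_eq_finrank' hcard) (by simpa using hf)

variable {ι : Type*} {v : ι → Fin 3 → 𝔽}

theorem eq_zero_of_two_lt_card_of_apply_eq_zero
    (hgen : ∀ i j k, i ≠ j → j ≠ k → i ≠ k → LinearIndependent 𝔽 ![v i, v j, v k])
    {f : (Fin 3 → 𝔽) →ₗ[𝔽] 𝔽} {s : Finset ι} (hs : 2 < s.card) (hf : ∀ i ∈ s, f (v i) = 0) :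
    f = 0 := by
  obtain ⟨i, hi, j, hj, k, hk, hij, hik, hjk⟩ := Finset.two_lt_card.mp hs
  refine LinearMap.eq_zero_of_linearIndependent_of_card_eq_finrank (hgen i j k hij hjk hik)
    (by simp) fun l => ?_
  fin_cases l <;> simp [hf, hi, hj, hk]

theorem QuadraticForm.not_exists_eq_mul_of_apply_eq_zero [Fintype ι]
    (hι : 5 ≤ Fintype.card ι)
    (hgen : ∀ i j k, i ≠ j → j ≠ k → i ≠ k → LinearIndependent 𝔽 ![v i, v j, v k])
    {Q : QuadraticForm 𝔽 (Fin 3 → 𝔽)} (hQ : Q ≠ 0) (hQv : ∀ i, Q (v i) = 0) :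
    ¬∃ f g : (Fin 3 → 𝔽) →ₗ[𝔽] 𝔽, ∀ x, Q x = f x * g x := by
  classical
  rintro ⟨f, g, hfg⟩
  set s := Finset.univ.filter fun i => f (v i) = 0
  have hsplit : s.card + sᶜ.card = Fintype.card ι := s.card_add_card_compl
  have hfg0 : f = 0 ∨ g = 0 := by
    by_cases hs : 2 < s.card
    · exact .inl (eq_zero_of_two_lt_card_of_apply_eq_zero hgen hs (by simp [s]))
    · refine .inr (eq_zero_of_two_lt_card_of_apply_eq_zero hgen (s := sᶜ) (by omega)
        fun i hi => ?_)
      have hfi : f (v i) ≠ 0 := by simpa [s] using hi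
      exact (mul_eq_zero.mp ((hfg _).symm.trans (hQv i))).resolve_left hfi
  apply hQ
  ext x
  rcases hfg0 with rfl | rfl <;> simp [hfg]

end Conics

theorem pascal_iff_conic_general {𝔽 : Type*} [Field 𝔽]
    (v : Fin 6 → (Fin 3 → 𝔽))
    (harc : ∀ i j k : Fin 6, i ≠ j → j ≠ k → i ≠ k →
      LinearIndependent 𝔽 ![v i, v j, v k]) :
    (∃ x y z : Fin 3 → 𝔽, x ≠ 0 ∧ y ≠ 0 ∧ z ≠ 0 ∧
        x ∈ Submodule.span 𝔽 {v 0, v 1} ⊓ Submodule.span 𝔽 {v 3, v 4} ∧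
        y ∈ Submodule.span 𝔽 {v 1, v 2} ⊓ Submodule.span 𝔽 {v 4, v 5} ∧
        z ∈ Submodule.span 𝔽 {v 2, v 3} ⊓ Submodule.span 𝔽 {v 5, v 0} ∧
        ¬LinearIndependent 𝔽 ![x, y, z]) ↔
      (∃ Q : QuadraticForm 𝔽 (Fin 3 → 𝔽), Q ≠ 0 ∧
        (¬∃ f g : (Fin 3 → 𝔽) →ₗ[𝔽] 𝔽, ∀ x, Q x = f x * g x) ∧
        ∀ i, Q (v i) = 0) := by
  have hcross : ∀ i j k : Fin 6, [i, j, k].Nodup → (v i ⨯₃ v j) ⬝ᵥ v k ≠ 0 := by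
    intro i j k hijk
    simp only [List.nodup_cons, List.mem_cons, not_or, List.not_mem_nil, not_false_eq_true,
      List.nodup_nil, and_true] at hijk
    rw [dotProduct_comm, triple_product_permutation,
      ← linearIndependent_iff_triple_product_ne_zero]
    exact harc i j k hijk.1.1 hijk.2 hijk.1.2
  have hline : ∀ i j k : Fin 6, [i, j, k].Nodup → LinearIndependent 𝔽 ![v i, v j] :=
    fun i j k hijk => crossProduct_ne_zero_iff_linearIndependent.mp fun h =>
      hcross i j k hijk (by rw [h, zero_dotProduct])
  have hmeet : ∀ i j k l : Fin 6, [i, j, k].Nodup → [k, l, i].Nodup →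
      Submodule.span 𝔽 {v i, v j} ⊓ Submodule.span 𝔽 {v k, v l} =
        𝔽 ∙ ((v i ⨯₃ v j) ⨯₃ (v k ⨯₃ v l)) ∧ (v i ⨯₃ v j) ⨯₃ (v k ⨯₃ v l) ≠ 0 :=
    fun i j k l hijk hkli =>
      ⟨span_pair_inf_span_pair_eq (hline i j k hijk) (hline k l i hkli) (hcross i j k hijk),
        cross_cross_ne_zero (hline k l i hkli) (hcross i j k hijk)⟩
  obtain ⟨hX, hx₀⟩ := hmeet 0 1 3 4 (by decide) (by decide)
  obtain ⟨hY, hy₀⟩ := hmeet 1 2 4 5 (by decide) (by decide)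
  obtain ⟨hZ, hz₀⟩ := hmeet 2 3 5 0 (by decide) (by decide)
  rw [hX, hY, hZ, exists_mem_span_singleton_not_linearIndependent_iff hx₀ hy₀ hz₀,
    pascal_triple_product_eq_det_veronese,
    ← exists_quadraticForm_ne_zero_vanishing_iff_det_eq_zero]
  exact ⟨fun ⟨Q, hQ, hQv⟩ =>
      ⟨Q, hQ, Q.not_exists_eq_mul_of_apply_eq_zero (by simp) harc hQ hQv, hQv⟩,
    fun ⟨Q, hQ, _, hQv⟩ => ⟨Q, hQ, hQv⟩⟩

theorem pascal_iff_conic {𝔽 : Type*} [Field 𝔽]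
    (v : Fin 6 → (Fin 3 → 𝔽)) (hv0 : ∀ i, v i ≠ 0)
    (harc : ∀ i j k : Fin 6, i ≠ j → j ≠ k → i ≠ k →
      LinearIndependent 𝔽 ![v i, v j, v k]) :
    (∃ x y z : Fin 3 → 𝔽, x ≠ 0 ∧ y ≠ 0 ∧ z ≠ 0 ∧
        x ∈ Submodule.span 𝔽 {v 0, v 1} ⊓ Submodule.span 𝔽 {v 3, v 4} ∧
        y ∈ Submodule.span 𝔽 {v 1, v 2} ⊓ Submodule.span 𝔽 {v 4, v 5} ∧
        z ∈ Submodule.span 𝔽 {v 2, v 3} ⊓ Submodule.span 𝔽 {v 5, v 0} ∧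
        ¬LinearIndependent 𝔽 ![x, y, z]) ↔
      (∃ Q : QuadraticForm 𝔽 (Fin 3 → 𝔽), Q ≠ 0 ∧
        (¬∃ f g : (Fin 3 → 𝔽) →ₗ[𝔽] 𝔽, ∀ x, Q x = f x * g x) ∧
        ∀ i, Q (v i) = 0) :=
  pascal_iff_conic_general v harc
end
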